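/- Every flattened state has one of two forms: either ⟨v, []⟩ where v is a value (a variable or constructor-rooted term) and the stack is empty, or ⟨f(t₁,...,tₙ), S⟩ where the first component is an operation-rooted term. -/

import Mathlib

/-- First-order terms: variables, constructor-rooted terms and
operation-rooted terms (function calls). -/
inductive Term where
  | var : ℕ → Term
  | cons : ℕ → List Term → Term
  | fn : ℕ → List Term → Term

/-- Application of a substitution to a term. -/
def subst (σ : ℕ → Term) : Term → Term
  | .var x => σ x
  | .cons c ts => .cons c (ts.attach.map (fun t => subst σ t.1))
  | .fn f ts => .fn f (ts.attach.map (fun t => subst σ t.1))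
decreasing_by
  · have := List.sizeOf_lt_of_mem t.2
    simp only [Term.cons.sizeOf_spec]; omega
  · have := List.sizeOf_lt_of_mem t.2
    simp only [Term.fn.sizeOf_spec]; omega


/-- The substitution `{x ↦ t}`. -/
def single (x : ℕ) (t : Term) : ℕ → Term :=
  fun y => if y = x then t else .var y

/-- Values: terms in head normal form, i.e. variables or
constructor-rooted terms. -/
def IsValue : Term → Prop
  | .var _ => True
  | .cons _ _ => True
  | .fn _ _ => False

/-- A stack: a list of pairs (term, variable) representing the current
evaluation context. -/
abbrev Stack := List (Term × ℕ)

/-- A state of the extended operational semantics: a term to be evaluated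
together with a stack. -/
abbrev State := Term × Stack

/-- The `replace` and `flatten` rules of the extended operational semantics,
parameterized by the auxiliary (partial) function `flat`:
* `replace`: a state `⟨v, (f(t̄ₙ),x):S⟩` with `v` a value rewrites to
  `⟨{x↦v}(f(t̄ₙ)), S⟩`;
* `flatten`: a state `⟨f(t̄ₙ), S⟩` rewrites to `flat(f(t̄ₙ), S)` whenever
  `flat` yields a result. -/
inductive RFStep (flat : State → Option State) : State → State → Prop
  | replace {v : Term} {u : Term} {x : ℕ} {S : Stack} (hv : IsValue v) :
      RFStep flat (v, (u, x) :: S) (subst (single x v) u, S)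
  | flatten {f : ℕ} {ts : List Term} {S : Stack} {s' : State}
      (h : flat (.fn f ts, S) = some s') :
      RFStep flat (.fn f ts, S) s'

/-- A flattened state: one to which neither `replace` nor `flatten`
applies. -/
def Flattened (flat : State → Option State) (s : State) : Prop :=
  ∀ s', ¬ RFStep flat s s'

theorem Term.isValue_or_eq_fn : ∀ t : Term, IsValue t ∨ ∃ f ts, t = .fn f ts
  | .var _ => Or.inl trivial
  | .cons _ _ => Or.inl trivial
  | .fn f ts => Or.inr ⟨f, ts, rfl⟩

theorem Flattened.stack_eq_nil_of_isValue {flat : State → Option State} {v : Term} {S : Stack}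
    (hs : Flattened flat (v, S)) (hv : IsValue v) : S = [] := by
  obtain _ | ⟨⟨u, x⟩, S⟩ := S
  · rfl
  · exact absurd (RFStep.replace hv) (hs _)

/-- Every flattened state has one of two forms: either `⟨v, []⟩` where `v`
is a value (a variable or a constructor-rooted term) and the stack is empty,
or `⟨f(t₁,...,tₙ), S⟩` where the first component is operation-rooted. -/
theorem flattened_state_form (flat : State → Option State) (s : State)
    (hs : Flattened flat s) :
    (∃ v : Term, s = (v, []) ∧ IsValue v) ∨
    (∃ (f : ℕ) (ts : List Term) (S : Stack), s = (.fn f ts, S)) := by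
  obtain ⟨t, S⟩ := s
  rcases t.isValue_or_eq_fn with hv | ⟨f, ts, rfl⟩
  · exact Or.inl ⟨t, by rw [hs.stack_eq_nil_of_isValue hv], hv⟩
  · exact Or.inr ⟨f, ts, S, rfl⟩
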